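/- Let j ≥ 1 and θ ∈ ℝ, and let Q = (|1⟩⟨1|)^{⊗(j−1)} (the identity scalar when j = 1). Then exp( iθ · (Z ⊗ Q) ) = R_z(−2θ) ⊗ Q + I ⊗ (I^{⊗(j−1)} − Q), where R_z(φ) = diag(e^{−iφ/2}, e^{iφ/2}) and the exponential is the matrix exponential of the 2^j × 2^j matrix iθ(Z ⊗ Q). -/

import Mathlib

open Matrix
open scoped Kronecker

/-- `|1⟩⟨1|`. -/
noncomputable def proj1 : Matrix (Fin 2) (Fin 2) ℂ := Matrix.single 1 1 1

/-- The Pauli-Z gate. -/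
noncomputable def pauliZ : Matrix (Fin 2) (Fin 2) ℂ := !![1, 0; 0, -1]

/-- `R_z(φ) = diag(e^{−iφ/2}, e^{iφ/2})`. -/
noncomputable def Rz (φ : ℝ) : Matrix (Fin 2) (Fin 2) ℂ :=
  !![Complex.exp (-(Complex.I * φ / 2)), 0; 0, Complex.exp (Complex.I * φ / 2)]

/-- The `k`-fold Kronecker product of the 2×2 matrices `M 0, …, M (k-1)` (most significant
bit = leftmost factor `M 0`), realized on the index type `Fin k → Fin 2`. -/
noncomputable def kronPow (k : ℕ) (M : Fin k → Matrix (Fin 2) (Fin 2) ℂ) :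
    Matrix (Fin k → Fin 2) (Fin k → Fin 2) ℂ :=
  Matrix.of fun x y => ∏ i, M i (x i) (y i)

open NormedSpace in
/-- Exponential of a complex combination of two orthogonal idempotent matrices. -/
lemma exp_two_idem {n : Type*} [Fintype n] [DecidableEq n]
    (p q : Matrix n n ℂ) (hp : p * p = p) (hq : q * q = q)
    (hpq : p * q = 0) (hqp : q * p = 0) (a b : ℂ) :
    NormedSpace.exp (a • p + b • q) =
      Complex.exp a • p + Complex.exp b • q + (1 - p - q) := by
  letI : SeminormedRing (Matrix n n ℂ) := Matrix.linftyOpSemiNormedRing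
  letI : NormedRing (Matrix n n ℂ) := Matrix.linftyOpNormedRing
  letI : NormedAlgebra ℂ (Matrix n n ℂ) := Matrix.linftyOpNormedAlgebra
  set r : Matrix n n ℂ := 1 - p - q with hr
  have hrp : r * p = 0 := by simp [hr, sub_mul, hp, hqp]
  have hpr : p * r = 0 := by simp [hr, mul_sub, hp, hpq]
  have hrq : r * q = 0 := by simp [hr, sub_mul, hq, hpq]
  have hqr : q * r = 0 := by simp [hr, mul_sub, hq, hqp]
  have hrr : r * r = r := by
    rw [hr]; simp [mul_sub, sub_mul, hp, hq, hpq, hqp]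
  let f : (ℂ × ℂ × ℂ) →ₐ[ℂ] Matrix n n ℂ :=
  { toFun := fun x => x.1 • p + x.2.1 • q + x.2.2 • r
    map_one' := by simp [hr]
    map_mul' := fun x y => by
      simp only [Prod.fst_mul, Prod.snd_mul, add_mul, mul_add, smul_mul_smul_comm, hp, hq, hrr,
        hpq, hqp, hpr, hrp, hqr, hrq, smul_zero, add_zero, zero_add]
    map_zero' := by simp
    map_add' := fun x y => by
      simp only [Prod.fst_add, Prod.snd_add, add_smul]
      abel
    commutes' := fun c => by
      rw [show (algebraMap ℂ (ℂ × ℂ × ℂ)) c = (c, c, c) from rfl]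
      rw [Algebra.algebraMap_eq_smul_one]
      simp [hr, smul_sub] }
  have hf : Continuous f := by
    show Continuous fun x : ℂ × ℂ × ℂ => x.1 • p + x.2.1 • q + x.2.2 • r
    fun_prop
  have key := map_exp f hf (a, b, (0 : ℂ))
  have hdom : f (a, b, (0 : ℂ)) = a • p + b • q := by
    show a • p + b • q + (0 : ℂ) • r = _
    simp
  have e2 : exp ((b, (0 : ℂ)) : ℂ × ℂ) = (exp b, exp (0 : ℂ)) :=
    Prod.ext (Prod.fst_exp _) (Prod.snd_exp _)
  have e1 : exp ((a, b, (0 : ℂ)) : ℂ × ℂ × ℂ) = (exp a, exp ((b, (0 : ℂ)) : ℂ × ℂ)) :=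
    Prod.ext (Prod.fst_exp _) (Prod.snd_exp _)
  have hexp : exp ((a, b, (0 : ℂ)) : ℂ × ℂ × ℂ) = (Complex.exp a, Complex.exp b, 1) := by
    rw [e1, e2, NormedSpace.exp_zero, ← Complex.exp_eq_exp_ℂ]
  rw [hdom, hexp] at key
  refine key.symm.trans ?_
  show Complex.exp a • p + Complex.exp b • q + (1 : ℂ) • r = _
  rw [one_smul]

/-- `(|1⟩⟨1|)^{⊗k}` is a standard basis matrix. -/
lemma kronPow_proj1 (k : ℕ) :
    kronPow k (fun _ => proj1) =
      Matrix.single (fun _ => 1) (fun _ => 1) (1 : ℂ) := by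
  classical
  ext x y
  simp only [kronPow, proj1, Matrix.single, Matrix.of_apply]
  simp only [Finset.prod_boole, Finset.mem_univ, forall_true_left]
  by_cases h : (fun _ => (1 : Fin 2)) = x ∧ (fun _ => (1 : Fin 2)) = y
  · obtain ⟨h1, h2⟩ := h
    simp [← h1, ← h2]
  · rw [if_neg, if_neg h]
    intro hall
    exact h ⟨funext fun i => (hall i).1, funext fun i => (hall i).2⟩

/-- For `j = k + 1 ≥ 1` and `θ ∈ ℝ`, with `Q = (|1⟩⟨1|)^{⊗(j−1)}` (the
identity scalar when `j = 1`),
`exp (iθ (Z ⊗ Q)) = R_z(−2θ) ⊗ Q + I ⊗ (I^{⊗(j−1)} − Q)`,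
i.e. the exponential is exactly the multi-controlled `R_z` gate `CRZ(−2θ)`. -/
theorem exp_Z_kron_proj (k : ℕ) (θ : ℝ) :
    NormedSpace.exp ((Complex.I * θ) • (pauliZ ⊗ₖ kronPow k (fun _ => proj1))) =
      Rz (-2 * θ) ⊗ₖ kronPow k (fun _ => proj1)
        + (1 : Matrix (Fin 2) (Fin 2) ℂ) ⊗ₖ
            ((1 : Matrix (Fin k → Fin 2) (Fin k → Fin 2) ℂ) - kronPow k (fun _ => proj1)) := by
  set Q := kronPow k (fun _ => proj1) with hQdef
  set E : Matrix (Fin 2) (Fin 2) ℂ := Matrix.single 0 0 1 with hE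
  have hQQ : Q * Q = Q := by
    rw [hQdef, kronPow_proj1]
    simpa using Matrix.single_mul_single_same
      (i := fun _ => (1 : Fin 2)) (j := fun _ => 1) (c := (1:ℂ)) (fun _ => 1) 1
  have hEE : E * E = E := by
    ext a b
    fin_cases a <;> fin_cases b <;>
      simp [hE, Matrix.single, Matrix.mul_apply, Fin.sum_univ_two]
  have hPP : proj1 * proj1 = proj1 := by
    ext a b
    fin_cases a <;> fin_cases b <;>
      simp [proj1, Matrix.single, Matrix.mul_apply, Fin.sum_univ_two]
  have hEP : E * proj1 = 0 := by
    ext a b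
    fin_cases a <;> fin_cases b <;>
      simp [hE, proj1, Matrix.single, Matrix.mul_apply, Fin.sum_univ_two]
  have hPE : proj1 * E = 0 := by
    ext a b
    fin_cases a <;> fin_cases b <;>
      simp [hE, proj1, Matrix.single, Matrix.mul_apply, Fin.sum_univ_two]
  set p := E ⊗ₖ Q with hp
  set q := proj1 ⊗ₖ Q with hq
  have hpp : p * p = p := by rw [hp, ← Matrix.mul_kronecker_mul, hEE, hQQ]
  have hqq : q * q = q := by rw [hq, ← Matrix.mul_kronecker_mul, hPP, hQQ]
  have hpq : p * q = 0 := by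
    rw [hp, hq, ← Matrix.mul_kronecker_mul, hEP, Matrix.zero_kronecker]
  have hqp : q * p = 0 := by
    rw [hp, hq, ← Matrix.mul_kronecker_mul, hPE, Matrix.zero_kronecker]
  have hZ : pauliZ = E + (-1 : ℂ) • proj1 := by
    ext i j
    fin_cases i <;> fin_cases j <;>
      simp [pauliZ, hE, proj1, Matrix.single]
  have hEsum : E + proj1 = 1 := by
    ext i j
    fin_cases i <;> fin_cases j <;>
      simp [hE, proj1, Matrix.single, Matrix.one_apply]
  have harg : (Complex.I * θ) • (pauliZ ⊗ₖ Q)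
      = (Complex.I * θ) • p + (-(Complex.I * θ)) • q := by
    rw [hZ, Matrix.add_kronecker, Matrix.smul_kronecker, smul_add, smul_smul, ← hp, ← hq]
    ring_nf
  have hRz : Rz (-2 * θ)
      = Complex.exp (Complex.I * θ) • E + Complex.exp (-(Complex.I * θ)) • proj1 := by
    ext i j
    fin_cases i <;> fin_cases j <;>
      · simp [Rz, hE, proj1, Matrix.single]
        try ring_nf
        try push_cast
        try ring_nf
  have hsub : (1 : Matrix (Fin 2) (Fin 2) ℂ) ⊗ₖ
      ((1 : Matrix (Fin k → Fin 2) (Fin k → Fin 2) ℂ) - Q) = 1 - p - q := by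
    have : (1 : Matrix (Fin k → Fin 2) (Fin k → Fin 2) ℂ) - Q = 1 + (-1 : ℂ) • Q := by
      rw [neg_one_smul]; abel
    rw [this, Matrix.kronecker_add, Matrix.kronecker_smul, Matrix.one_kronecker_one,
      ← hEsum, Matrix.add_kronecker, ← hp, ← hq, neg_one_smul]
    abel
  rw [harg, exp_two_idem p q hpp hqq hpq hqp, hsub,
    hRz, Matrix.add_kronecker, Matrix.smul_kronecker, Matrix.smul_kronecker, ← hp, ← hq]
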